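/- arXiv:1707.02572 — 8 statements merged into one kernel-verified Lean document; each statement's English description precedes it below -/
import Mathlib

section
/- For any SML assortment S = S₁ ⊎ S₂ with nonempty S₁ and S₂, the expected revenue can be decomposed as R(S) = α(S₁)·λ(S₁,S) + R(S₂)·(1 − λ(S₁,S))², where λ(S₁,S) = U(S₁)/(U(S)+u₀) and R(S₂) = α(S₂)·U(S₂)/(U(S₂)+u₀). -/
open Finset

/-- Total utility of an assortment. -/
noncomputable def Utot {ι : Type*} (u : ι → ℝ) (S : Finset ι) : ℝ := ∑ x ∈ S, u x

/-- Utility-weighted average revenue α(S). -/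
noncomputable def alphaRev {ι : Type*} (u r : ι → ℝ) (S : Finset ι) : ℝ :=
  (∑ x ∈ S, u x * r x) / Utot u S

/-- Expected revenue of the assortment S = S₁ ⊎ S₂ under the Sequential MNL:
R(S) = α(S₁)U(S₁)/(U(S)+u₀) + (α(S₂)U(S₂)/(U(S)+u₀))·(1 − U(S₁)/(U(S)+u₀)). -/
noncomputable def RevSML {ι : Type*} [DecidableEq ι] (u r : ι → ℝ) (u0 : ℝ)
    (S1 S2 : Finset ι) : ℝ :=
  alphaRev u r S1 * Utot u S1 / (Utot u (S1 ∪ S2) + u0) +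
    alphaRev u r S2 * Utot u S2 / (Utot u (S1 ∪ S2) + u0) *
      (1 - Utot u S1 / (Utot u (S1 ∪ S2) + u0))

/-- R(S) = α(S₁)·λ(S₁,S) + R(S₂)·(1 − λ(S₁,S))², where λ(S₁,S) = U(S₁)/(U(S)+u₀)
and R(S₂) = α(S₂)U(S₂)/(U(S₂)+u₀) is the MNL revenue of S₂. -/
theorem stmt4 {ι : Type*} [DecidableEq ι] (u r : ι → ℝ) (u0 : ℝ) (S1 S2 : Finset ι)
    (hu : ∀ x ∈ S1 ∪ S2, 0 < u x) (hr : ∀ x, 0 ≤ r x) (hu0 : 0 < u0)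
    (h1 : S1.Nonempty) (h2 : S2.Nonempty) (hd : Disjoint S1 S2) :
    RevSML u r u0 S1 S2 =
      alphaRev u r S1 * (Utot u S1 / (Utot u (S1 ∪ S2) + u0)) +
        (alphaRev u r S2 * Utot u S2 / (Utot u S2 + u0)) *
          (1 - Utot u S1 / (Utot u (S1 ∪ S2) + u0)) ^ 2 := by
  have hA : 0 < Utot u S1 := Finset.sum_pos (fun x hx => hu x (Finset.mem_union_left _ hx)) h1
  have hB : 0 < Utot u S2 := Finset.sum_pos (fun x hx => hu x (Finset.mem_union_right _ hx)) h2
  have hU : Utot u (S1 ∪ S2) = Utot u S1 + Utot u S2 := Finset.sum_union hd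
  have hAB0 : Utot u S1 + Utot u S2 + u0 ≠ 0 := by positivity
  have hB0 : Utot u S2 + u0 ≠ 0 := by positivity
  rw [RevSML, hU]
  field_simp
  ring
end

section
/- If S* = S₁* ⊎ S₂* is an optimal assortment under the SML with optimal revenue R* and S₁* is nonempty, then α(S₁*) ≥ R*, i.e., the utility-weighted average revenue of the first-level products in an optimal assortment is at least the optimal expected revenue. -/
open Finset

/-- Bounding level 1: in an optimal assortment S* = S₁* ⊎ S₂* with S₁* nonempty,
α(S₁*) ≥ R*. -/
theorem stmt5 {ι : Type*} [DecidableEq ι] (u r : ι → ℝ) (u0 : ℝ)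
    (X1 X2 S1 S2 : Finset ι)
    (hu : ∀ x ∈ X1 ∪ X2, 0 < u x) (hr : ∀ x, 0 ≤ r x) (hu0 : 0 < u0)
    (hX : Disjoint X1 X2) (hS1 : S1 ⊆ X1) (hS2 : S2 ⊆ X2)
    (hopt : ∀ T1 T2 : Finset ι, T1 ⊆ X1 → T2 ⊆ X2 →
      RevSML u r u0 T1 T2 ≤ RevSML u r u0 S1 S2)
    (hne : S1.Nonempty) :
    RevSML u r u0 S1 S2 ≤ alphaRev u r S1 := by
  by_contra h
  push_neg at h
  have hdisj : Disjoint S1 S2 := hX.mono hS1 hS2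
  have hU : Utot u (S1 ∪ S2) = Utot u S1 + Utot u S2 := Finset.sum_union hdisj
  have hU1 : 0 < Utot u S1 :=
    Finset.sum_pos (fun x hx => hu x (mem_union_left _ (hS1 hx))) hne
  have hU2 : 0 ≤ Utot u S2 :=
    Finset.sum_nonneg fun x hx => (hu x (mem_union_right _ (hS2 hx))).le
  have hb : 0 ≤ alphaRev u r S2 :=
    div_nonneg (Finset.sum_nonneg fun x hx =>
      mul_nonneg (hu x (mem_union_right _ (hS2 hx))).le (hr x)) hU2
  have hD : 0 < Utot u S1 + Utot u S2 + u0 := by linarith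
  have hD2 : 0 < Utot u S2 + u0 := by linarith
  have hopt2 := hopt ∅ S2 (empty_subset _) hS2
  have he : RevSML u r u0 ∅ S2 = alphaRev u r S2 * Utot u S2 / (Utot u S2 + u0) := by
    simp [RevSML, Utot, alphaRev]
  rw [he] at hopt2
  set R := RevSML u r u0 S1 S2 with hR
  set a := alphaRev u r S1
  set b := alphaRev u r S2
  set U1 := Utot u S1
  set U2 := Utot u S2
  have hRdef : R = a * U1 / (U1 + U2 + u0) +
      b * U2 / (U1 + U2 + u0) * (1 - U1 / (U1 + U2 + u0)) := by
    rw [hR, RevSML, hU]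
  -- From a < R derive R < b * U2 / (U1 + U2 + u0)
  have hp : 0 < U1 / (U1 + U2 + u0) := div_pos hU1 hD
  have hp1 : U1 / (U1 + U2 + u0) < 1 := by
    rw [div_lt_one hD]; linarith
  have hstep : R * (1 - U1 / (U1 + U2 + u0)) <
      b * U2 / (U1 + U2 + u0) * (1 - U1 / (U1 + U2 + u0)) := by
    have h1 : a * U1 / (U1 + U2 + u0) < R * (U1 / (U1 + U2 + u0)) := by
      rw [mul_div_assoc]
      exact mul_lt_mul_of_pos_right h hp
    nlinarith [hRdef]
  have hlt : R < b * U2 / (U1 + U2 + u0) :=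
    lt_of_mul_lt_mul_right hstep (by linarith)
  have hmono : b * U2 / (U1 + U2 + u0) ≤ b * U2 / (U2 + u0) := by
    apply div_le_div_of_nonneg_left (mul_nonneg hb hU2) hD2
    linarith
  linarith
end

section
/- If S* = S₁* ⊎ S₂* is an optimal assortment under the SML with optimal revenue R* and S₂* is nonempty, then α(S₂*) ≥ R*/(1 − λ(S₁*,S*)), where λ(S₁*,S*) = U(S₁*)/(U(S*)+u₀). -/
open Finset

/-- Bounding level 2: in an optimal assortment S* = S₁* ⊎ S₂* with S₂* nonempty,
α(S₂*) ≥ R*/(1 − λ(S₁*,S*)) where λ(S₁*,S*) = U(S₁*)/(U(S*)+u₀). -/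
theorem stmt6 {ι : Type*} [DecidableEq ι] (u r : ι → ℝ) (u0 : ℝ)
    (X1 X2 S1 S2 : Finset ι)
    (hu : ∀ x ∈ X1 ∪ X2, 0 < u x) (hr : ∀ x, 0 ≤ r x) (hu0 : 0 < u0)
    (hX : Disjoint X1 X2) (hS1 : S1 ⊆ X1) (hS2 : S2 ⊆ X2)
    (hopt : ∀ T1 T2 : Finset ι, T1 ⊆ X1 → T2 ⊆ X2 →
      RevSML u r u0 T1 T2 ≤ RevSML u r u0 S1 S2)
    (hne : S2.Nonempty) :
    RevSML u r u0 S1 S2 / (1 - Utot u S1 / (Utot u (S1 ∪ S2) + u0)) ≤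
      alphaRev u r S2 := by
  set U1 := Utot u S1 with hU1def
  set U2 := Utot u S2 with hU2def
  set A := ∑ x ∈ S1, u x * r x with hAdef
  set B := ∑ x ∈ S2, u x * r x with hBdef
  have hdisj : Disjoint S1 S2 := hX.mono hS1 hS2
  have hU12 : Utot u (S1 ∪ S2) = U1 + U2 := by
    rw [hU1def, hU2def, Utot, Utot, Utot, Finset.sum_union hdisj]
  have hU1nn : 0 ≤ U1 := Finset.sum_nonneg fun x hx =>
    (hu x (Finset.mem_union_left _ (hS1 hx))).le
  have hU2pos : 0 < U2 := Finset.sum_pos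
    (fun x hx => hu x (Finset.mem_union_right _ (hS2 hx))) hne
  have hAnn : 0 ≤ A := Finset.sum_nonneg fun x hx =>
    mul_nonneg (hu x (Finset.mem_union_left _ (hS1 hx))).le (hr x)
  have hBnn : 0 ≤ B := Finset.sum_nonneg fun x hx =>
    mul_nonneg (hu x (Finset.mem_union_right _ (hS2 hx))).le (hr x)
  have hα1 : alphaRev u r S1 * U1 = A := by
    rcases eq_or_ne U1 0 with h | h
    · have hS1e : S1 = ∅ := by
        by_contra hc
        exact absurd h (ne_of_gt (Finset.sum_pos
          (fun x hx => hu x (Finset.mem_union_left _ (hS1 hx)))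
          (Finset.nonempty_of_ne_empty hc)))
      simp [hS1e, hAdef, h]
    · rw [alphaRev, ← hU1def, div_mul_cancel₀ _ h]
  have hα2 : alphaRev u r S2 = B / U2 := rfl
  have hα2' : alphaRev u r S2 * U2 = B := by
    rw [hα2, div_mul_cancel₀ _ hU2pos.ne']
  have hDpos : 0 < U1 + U2 + u0 := by linarith
  have hDne : (U1 + U2 + u0) ≠ 0 := hDpos.ne'
  have h1pos : (0:ℝ) < U1 + u0 := by linarith
  have hkey := hopt S1 ∅ hS1 (Finset.empty_subset _)
  rw [RevSML, Finset.union_empty] at hkey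
  have hUe : Utot u (∅ : Finset ι) = 0 := by simp [Utot]
  rw [hUe] at hkey
  simp only [mul_zero, zero_div, zero_mul, add_zero, ← hU1def] at hkey
  rw [hα1] at hkey
  have hRform : RevSML u r u0 S1 S2 =
      A / (U1 + U2 + u0) + B / (U1 + U2 + u0) * (1 - U1 / (U1 + U2 + u0)) := by
    rw [RevSML, hU12, ← hU1def, ← hU2def, hα1, hα2']
  rw [hRform] at hkey
  have hre : A / (U1 + U2 + u0) + B / (U1 + U2 + u0) * (1 - U1 / (U1 + U2 + u0))
      = (A * (U1 + U2 + u0) + B * (U2 + u0)) / ((U1 + U2 + u0) * (U1 + U2 + u0)) := by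
    field_simp
    ring
  rw [hre, div_le_div_iff₀ h1pos (by positivity)] at hkey
  have hkey2 : A * U2 * (U1 + U2 + u0) ≤ B * (U2 + u0) * (U1 + u0) := by
    nlinarith [hkey]
  rw [hRform, hα2, hre, hU12]
  have h1lam : 1 - U1 / (U1 + U2 + u0) = (U2 + u0) / (U1 + U2 + u0) := by
    field_simp
    ring
  have h2pos : (0:ℝ) < U2 + u0 := by linarith
  have hcollapse : (A * (U1 + U2 + u0) + B * (U2 + u0)) /
      ((U1 + U2 + u0) * (U1 + U2 + u0)) / ((U2 + u0) / (U1 + U2 + u0)) =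
      (A * (U1 + U2 + u0) + B * (U2 + u0)) / ((U1 + U2 + u0) * (U2 + u0)) := by
    field_simp
  rw [h1lam, hcollapse, div_le_div_iff₀ (by positivity) hU2pos]
  nlinarith [hkey2, hBnn, hU2pos, hu0, hDpos]
end

section
/- Let S* = S₁* ⊎ S₂* be an optimal assortment under the SML with optimal revenue R*. Then for every nonempty subset Z of S₁* and every nonempty subset Z of S₂*, the utility-weighted average revenue satisfies α(Z) ≥ R*. -/
/-!
Write `W(T) = ∑_{x ∈ T} u(x) r(x)`, `D = U(S₁) + U(S₂) + u₀` and `E = U(S₂) + u₀`, so that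
`R(S₁, S₂) · D² = W(S₁) D + W(S₂) E`. Optimality of `S*` thus says `W(T₁) D + W(T₂) E ≤ R* D²`
for every competitor `(T₁, T₂)`, with `D, E` computed for it. Comparing with `(∅, ∅)`,
`(S₁*, ∅)` and `(∅, S₂*)` gives `R* ≥ 0`, `W(S₁*) ≤ R* D` and `W(S₂*) ≤ R* E`; comparing with `S*`
minus a nonempty `Z` and subtracting the identity for `S*` then leaves `R* U(Z) ≤ W(Z)`, i.e.
`R* ≤ α(Z)`.
-/

open Finset

noncomputable def weightedRev {ι : Type*} (u r : ι → ℝ) (S : Finset ι) : ℝ := ∑ x ∈ S, u x * r x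

section Algebra

variable {R A B D E a w : ℝ}

-- `A, B` stand for `W(S₁), W(S₂)`; a part of utility `w` and weighted revenue `a` is removed
-- from the first, resp. second, nest.
lemma mul_le_of_remove_left (hRD : R * D ^ 2 = A * D + B * E) (hA : A ≤ R * D) (hw : 0 < w)
    (hwD : w < D) (h : (A - a) * (D - w) + B * E ≤ R * (D - w) ^ 2) : R * w ≤ a := by
  have hexpand : (D - w) * (R * w - a) ≤ w * (A - R * D) := by linear_combination h + hRD
  nlinarith [mul_nonpos_of_nonneg_of_nonpos hw.le (sub_nonpos.2 hA)]

lemma mul_le_of_remove_right (hRD : R * D ^ 2 = A * D + B * E) (hB : B ≤ R * E) (hR : 0 ≤ R)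
    (hED : E ≤ D) (hw : 0 < w) (hwE : w < E)
    (h : A * (D - w) + (B - a) * (E - w) ≤ R * (D - w) ^ 2) : R * w ≤ a := by
  have hexpand : (E - w) * (R * w - a) ≤ w * (A + B + R * E - 2 * R * D) := by
    linear_combination h + hRD
  -- `D · (A + B + R E - 2 R D) = (D - E)(B - R D)`, and `B ≤ R E ≤ R D`.
  have hcoef : A + B + R * E - 2 * R * D ≤ 0 := by
    have hBD : B ≤ R * D := hB.trans (mul_le_mul_of_nonneg_left hED hR)
    nlinarith [mul_nonpos_of_nonneg_of_nonpos (sub_nonneg.2 hED) (sub_nonpos.2 hBD)]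
  nlinarith [mul_nonpos_of_nonneg_of_nonpos hw.le hcoef]

end Algebra

section SML

variable {ι : Type*} {u r : ι → ℝ} {u0 : ℝ}

lemma Utot_nonneg {S : Finset ι} (hu : ∀ x ∈ S, 0 < u x) : 0 ≤ Utot u S :=
  sum_nonneg fun x hx => (hu x hx).le

@[simp] lemma Utot_empty : Utot u ∅ = 0 := sum_empty

@[simp] lemma weightedRev_empty : weightedRev u r ∅ = 0 := sum_empty

lemma alphaRev_mul_Utot {S : Finset ι} (hu : ∀ x ∈ S, 0 < u x) :
    alphaRev u r S * Utot u S = weightedRev u r S := by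
  rcases S.eq_empty_or_nonempty with rfl | hne
  · simp [alphaRev, weightedRev, Utot]
  · exact div_mul_cancel₀ _ (sum_pos hu hne).ne'

variable [DecidableEq ι] {S1 S2 : Finset ι}

lemma RevSML_mul_sq (hS : Disjoint S1 S2) (hu : ∀ x ∈ S1 ∪ S2, 0 < u x)
    (hD : Utot u S1 + Utot u S2 + u0 ≠ 0) :
    RevSML u r u0 S1 S2 * (Utot u S1 + Utot u S2 + u0) ^ 2 =
      weightedRev u r S1 * (Utot u S1 + Utot u S2 + u0) +
        weightedRev u r S2 * (Utot u S2 + u0) := by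
  have hU : Utot u (S1 ∪ S2) = Utot u S1 + Utot u S2 := sum_union hS
  rw [RevSML, hU, alphaRev_mul_Utot fun x hx => hu x (mem_union_left _ hx),
    alphaRev_mul_Utot fun x hx => hu x (mem_union_right _ hx)]
  field_simp
  ring

lemma weightedRev_le_of_subset_of_optimal (hS : Disjoint S1 S2) (hu : ∀ x ∈ S1 ∪ S2, 0 < u x)
    (hu0 : 0 < u0)
    (hopt : ∀ T1 ⊆ S1, ∀ T2 ⊆ S2, RevSML u r u0 T1 T2 ≤ RevSML u r u0 S1 S2)
    {T1 T2 : Finset ι} (h1 : T1 ⊆ S1) (h2 : T2 ⊆ S2) :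
    weightedRev u r T1 * (Utot u T1 + Utot u T2 + u0) + weightedRev u r T2 * (Utot u T2 + u0) ≤
      RevSML u r u0 S1 S2 * (Utot u T1 + Utot u T2 + u0) ^ 2 := by
  have huT : ∀ x ∈ T1 ∪ T2, 0 < u x := fun x hx => hu x (union_subset_union h1 h2 hx)
  have hD : 0 < Utot u T1 + Utot u T2 + u0 := by
    have := Utot_nonneg fun x hx => huT x (mem_union_left T2 hx)
    have := Utot_nonneg fun x hx => huT x (mem_union_right T1 hx)
    linarith
  rw [← RevSML_mul_sq (hS.mono h1 h2) huT hD.ne']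
  gcongr
  exact hopt T1 h1 T2 h2

lemma RevSML_nonneg_of_optimal (hS : Disjoint S1 S2) (hu : ∀ x ∈ S1 ∪ S2, 0 < u x)
    (hu0 : 0 < u0)
    (hopt : ∀ T1 ⊆ S1, ∀ T2 ⊆ S2, RevSML u r u0 T1 T2 ≤ RevSML u r u0 S1 S2) :
    0 ≤ RevSML u r u0 S1 S2 := by
  have h := weightedRev_le_of_subset_of_optimal hS hu hu0 hopt (empty_subset S1) (empty_subset S2)
  simp only [weightedRev_empty, Utot_empty, zero_mul, zero_add] at h
  exact nonneg_of_mul_nonneg_left h (by positivity)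

lemma RevSML_le_alphaRev_of_subset_left (hS : Disjoint S1 S2) (hu : ∀ x ∈ S1 ∪ S2, 0 < u x)
    (hu0 : 0 < u0)
    (hopt : ∀ T1 ⊆ S1, ∀ T2 ⊆ S2, RevSML u r u0 T1 T2 ≤ RevSML u r u0 S1 S2)
    {Z : Finset ι} (hZ : Z ⊆ S1) (hZne : Z.Nonempty) :
    RevSML u r u0 S1 S2 ≤ alphaRev u r Z := by
  set R := RevSML u r u0 S1 S2
  have hw : 0 < Utot u Z := sum_pos (fun x hx => hu x (mem_union_left S2 (hZ hx))) hZne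
  have hUZ : Utot u (S1 \ Z) = Utot u S1 - Utot u Z := sum_sdiff_eq_sub hZ
  have hU1Z : 0 ≤ Utot u S1 - Utot u Z :=
    hUZ ▸ Utot_nonneg fun x hx => hu x (mem_union_left S2 (sdiff_subset hx))
  have hU2 : 0 ≤ Utot u S2 := Utot_nonneg fun x hx => hu x (mem_union_right S1 hx)
  have hR : 0 ≤ R := RevSML_nonneg_of_optimal hS hu hu0 hopt
  have hA : weightedRev u r S1 ≤ R * (Utot u S1 + Utot u S2 + u0) := by
    have h := weightedRev_le_of_subset_of_optimal hS hu hu0 hopt subset_rfl (empty_subset S2)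
    simp only [weightedRev_empty, Utot_empty, zero_mul, add_zero] at h
    calc weightedRev u r S1 ≤ R * (Utot u S1 + u0) :=
          le_of_mul_le_mul_right (a := Utot u S1 + u0) (by linear_combination h) (by linarith)
      _ ≤ R * (Utot u S1 + Utot u S2 + u0) := by gcongr; linarith
  have hrem := weightedRev_le_of_subset_of_optimal hS hu hu0 hopt (sdiff_subset (t := Z))
    subset_rfl
  rw [hUZ, show weightedRev u r (S1 \ Z) = weightedRev u r S1 - weightedRev u r Z from
    sum_sdiff_eq_sub hZ] at hrem
  rw [show alphaRev u r Z = weightedRev u r Z / Utot u Z from rfl, le_div_iff₀ hw]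
  exact mul_le_of_remove_left (RevSML_mul_sq hS hu (by linarith)) hA hw (by linarith)
    (by linear_combination hrem)

lemma RevSML_le_alphaRev_of_subset_right (hS : Disjoint S1 S2) (hu : ∀ x ∈ S1 ∪ S2, 0 < u x)
    (hu0 : 0 < u0)
    (hopt : ∀ T1 ⊆ S1, ∀ T2 ⊆ S2, RevSML u r u0 T1 T2 ≤ RevSML u r u0 S1 S2)
    {Z : Finset ι} (hZ : Z ⊆ S2) (hZne : Z.Nonempty) :
    RevSML u r u0 S1 S2 ≤ alphaRev u r Z := by
  set R := RevSML u r u0 S1 S2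
  have hw : 0 < Utot u Z := sum_pos (fun x hx => hu x (mem_union_right S1 (hZ hx))) hZne
  have hUZ : Utot u (S2 \ Z) = Utot u S2 - Utot u Z := sum_sdiff_eq_sub hZ
  have hU2Z : 0 ≤ Utot u S2 - Utot u Z :=
    hUZ ▸ Utot_nonneg fun x hx => hu x (mem_union_right S1 (sdiff_subset hx))
  have hU1 : 0 ≤ Utot u S1 := Utot_nonneg fun x hx => hu x (mem_union_left S2 hx)
  have hR : 0 ≤ R := RevSML_nonneg_of_optimal hS hu hu0 hopt
  have hB : weightedRev u r S2 ≤ R * (Utot u S2 + u0) := by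
    have h := weightedRev_le_of_subset_of_optimal hS hu hu0 hopt (empty_subset S1) subset_rfl
    simp only [weightedRev_empty, Utot_empty, zero_mul, zero_add] at h
    exact le_of_mul_le_mul_right (a := Utot u S2 + u0) (by linear_combination h) (by linarith)
  have hrem := weightedRev_le_of_subset_of_optimal hS hu hu0 hopt subset_rfl
    (sdiff_subset (t := Z))
  rw [hUZ, show weightedRev u r (S2 \ Z) = weightedRev u r S2 - weightedRev u r Z from
    sum_sdiff_eq_sub hZ] at hrem
  rw [show alphaRev u r Z = weightedRev u r Z / Utot u Z from rfl, le_div_iff₀ hw]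
  exact mul_le_of_remove_right (RevSML_mul_sq hS hu (by linarith)) hB hR (by linarith) hw
    (by linarith) (by linear_combination hrem)

end SML

theorem stmt9_general {ι : Type*} [DecidableEq ι] (u r : ι → ℝ) (u0 : ℝ)
    (X1 X2 S1 S2 : Finset ι)
    (hu : ∀ x ∈ X1 ∪ X2, 0 < u x) (hu0 : 0 < u0)
    (hX : Disjoint X1 X2) (hS1 : S1 ⊆ X1) (hS2 : S2 ⊆ X2)
    (hopt : ∀ T1 T2 : Finset ι, T1 ⊆ X1 → T2 ⊆ X2 →
      RevSML u r u0 T1 T2 ≤ RevSML u r u0 S1 S2) :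
    (∀ Z ⊆ S1, Z.Nonempty → RevSML u r u0 S1 S2 ≤ alphaRev u r Z) ∧
    (∀ Z ⊆ S2, Z.Nonempty → RevSML u r u0 S1 S2 ≤ alphaRev u r Z) := by
  have hS : Disjoint S1 S2 := hX.mono hS1 hS2
  have huS : ∀ x ∈ S1 ∪ S2, 0 < u x := fun x hx => hu x (union_subset_union hS1 hS2 hx)
  have hoptS : ∀ T1 ⊆ S1, ∀ T2 ⊆ S2, RevSML u r u0 T1 T2 ≤ RevSML u r u0 S1 S2 :=
    fun T1 h1 T2 h2 => hopt T1 T2 (h1.trans hS1) (h2.trans hS2)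
  exact ⟨fun Z hZ hZne => RevSML_le_alphaRev_of_subset_left hS huS hu0 hoptS hZ hZne,
    fun Z hZ hZne => RevSML_le_alphaRev_of_subset_right hS huS hu0 hoptS hZ hZne⟩

/-- In every optimal assortment S* = S₁* ⊎ S₂*, every nonempty subset Z of S₁* and
every nonempty subset Z of S₂* satisfies α(Z) ≥ R*. -/
theorem stmt9 {ι : Type*} [DecidableEq ι] (u r : ι → ℝ) (u0 : ℝ)
    (X1 X2 S1 S2 : Finset ι)
    (hu : ∀ x ∈ X1 ∪ X2, 0 < u x) (hr : ∀ x, 0 ≤ r x) (hu0 : 0 < u0)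
    (hX : Disjoint X1 X2) (hS1 : S1 ⊆ X1) (hS2 : S2 ⊆ X2)
    (hopt : ∀ T1 T2 : Finset ι, T1 ⊆ X1 → T2 ⊆ X2 →
      RevSML u r u0 T1 T2 ≤ RevSML u r u0 S1 S2) :
    (∀ Z ⊆ S1, Z.Nonempty → RevSML u r u0 S1 S2 ≤ alphaRev u r Z) ∧
    (∀ Z ⊆ S2, Z.Nonempty → RevSML u r u0 S1 S2 ≤ alphaRev u r Z) :=
  stmt9_general u r u0 X1 X2 S1 S2 hu hu0 hX hS1 hS2 hopt
end

section
/- Every product contained in an optimal assortment under the SML has revenue at least the optimal expected revenue: if S* is optimal with revenue R*, then r(x) ≥ R* for all x ∈ S*. -/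
open Finset

lemma alpha_mul {ι : Type*} (u r : ι → ℝ) (S : Finset ι) (h : ∀ x ∈ S, 0 < u x) :
    alphaRev u r S * Utot u S = ∑ x ∈ S, u x * r x := by
  rcases S.eq_empty_or_nonempty with h0 | hne
  · simp [h0, alphaRev, Utot]
  · have hU : 0 < Utot u S := Finset.sum_pos h hne
    rw [alphaRev, div_mul_cancel₀]
    exact ne_of_gt hU

lemma rev_formula {ι : Type*} [DecidableEq ι] (u r : ι → ℝ) (u0 : ℝ) (S1 S2 : Finset ι)
    (hd : Disjoint S1 S2) (h1 : ∀ x ∈ S1, 0 < u x) (h2 : ∀ x ∈ S2, 0 < u x)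
    (hu0 : 0 < u0) :
    RevSML u r u0 S1 S2 =
      ((∑ x ∈ S1, u x * r x) * (Utot u S1 + Utot u S2 + u0) +
        (∑ x ∈ S2, u x * r x) * (Utot u S2 + u0)) /
        (Utot u S1 + Utot u S2 + u0) ^ 2 := by
  have hU1 : 0 ≤ Utot u S1 := Finset.sum_nonneg fun x hx => (h1 x hx).le
  have hU2 : 0 ≤ Utot u S2 := Finset.sum_nonneg fun x hx => (h2 x hx).le
  have hD : (0:ℝ) < Utot u S1 + Utot u S2 + u0 := by linarith
  have hUnion : Utot u (S1 ∪ S2) = Utot u S1 + Utot u S2 := Finset.sum_union hd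
  rw [RevSML, hUnion, alpha_mul u r S1 h1, alpha_mul u r S2 h2]
  field_simp
  ring

/-- Every product in an optimal assortment has revenue at least the optimal revenue:
r(x) ≥ R* for all x ∈ S*. -/
theorem stmt10 {ι : Type*} [DecidableEq ι] (u r : ι → ℝ) (u0 : ℝ)
    (X1 X2 S1 S2 : Finset ι)
    (hu : ∀ x ∈ X1 ∪ X2, 0 < u x) (hr : ∀ x, 0 ≤ r x) (hu0 : 0 < u0)
    (hX : Disjoint X1 X2) (hS1 : S1 ⊆ X1) (hS2 : S2 ⊆ X2)
    (hopt : ∀ T1 T2 : Finset ι, T1 ⊆ X1 → T2 ⊆ X2 →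
      RevSML u r u0 T1 T2 ≤ RevSML u r u0 S1 S2) :
    ∀ x ∈ S1 ∪ S2, RevSML u r u0 S1 S2 ≤ r x := by
  intro x hx
  have hu1 : ∀ y ∈ S1, 0 < u y := fun y hy => hu y (mem_union_left _ (hS1 hy))
  have hu2 : ∀ y ∈ S2, 0 < u y := fun y hy => hu y (mem_union_right _ (hS2 hy))
  have hd : Disjoint S1 S2 := hX.mono hS1 hS2
  set U1 := Utot u S1 with hU1def
  set U2 := Utot u S2 with hU2def
  set A1 := ∑ y ∈ S1, u y * r y with hA1def
  set A2 := ∑ y ∈ S2, u y * r y with hA2def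
  have hU1 : 0 ≤ U1 := Finset.sum_nonneg fun y hy => (hu1 y hy).le
  have hU2 : 0 ≤ U2 := Finset.sum_nonneg fun y hy => (hu2 y hy).le
  have hA1 : 0 ≤ A1 := Finset.sum_nonneg fun y hy => mul_nonneg (hu1 y hy).le (hr y)
  have hA2 : 0 ≤ A2 := Finset.sum_nonneg fun y hy => mul_nonneg (hu2 y hy).le (hr y)
  have hD : (0:ℝ) < U1 + U2 + u0 := by linarith
  have hW : (0:ℝ) < U2 + u0 := by linarith
  have hR : RevSML u r u0 S1 S2 =
      (A1 * (U1 + U2 + u0) + A2 * (U2 + u0)) / (U1 + U2 + u0) ^ 2 :=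
    rev_formula u r u0 S1 S2 hd hu1 hu2 hu0
  rw [hR, div_le_iff₀ (by positivity)]
  -- Goal : A1 * (U1+U2+u0) + A2 * (U2+u0) ≤ r x * (U1+U2+u0)^2
  rcases Finset.mem_union.mp hx with hx1 | hx2
  · -- x ∈ S1 : compare with (S1.erase x, S2)
    have hv : 0 < u x := hu1 x hx1
    have hT1sub : S1.erase x ⊆ X1 := (Finset.erase_subset _ _).trans hS1
    have hu1' : ∀ y ∈ S1.erase x, 0 < u y := fun y hy =>
      hu1 y (Finset.mem_of_mem_erase hy)
    have hdT : Disjoint (S1.erase x) S2 := hd.mono_left (Finset.erase_subset _ _)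
    have hUT : Utot u (S1.erase x) = U1 - u x := by
      rw [hU1def, Utot, Utot, ← Finset.sum_erase_add S1 _ hx1]; ring
    have hAT : (∑ y ∈ S1.erase x, u y * r y) = A1 - u x * r x := by
      rw [hA1def, ← Finset.sum_erase_add S1 _ hx1]; ring
    have hUTnn : 0 ≤ U1 - u x := by
      rw [← hUT]; exact Finset.sum_nonneg fun y hy => (hu1' y hy).le
    have hD' : (0:ℝ) < U1 - u x + U2 + u0 := by linarith
    have hopt1 := hopt (S1.erase x) S2 hT1sub hS2
    rw [rev_formula u r u0 _ S2 hdT hu1' hu2 hu0, hUT, hAT, hR,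
      div_le_div_iff₀ (by positivity) (by positivity)] at hopt1
    simp only [← hU1def, ← hU2def, ← hA1def, ← hA2def] at hopt1
    by_contra hcon
    push_neg at hcon
    nlinarith [hopt1, mul_pos hv (mul_pos hD' (sub_pos.mpr hcon)),
      mul_nonneg (mul_nonneg hv.le (mul_nonneg hA2 hW.le)) hD.le]
  · -- x ∈ S2
    have hv : 0 < u x := hu2 x hx2
    -- Step A: compare with (∅, S2) to get key inequality A2 * U1 ≤ A1 * (U1+U2+u0)
    have hopt0 := hopt ∅ S2 (Finset.empty_subset _) hS2
    have hd0 : Disjoint (∅ : Finset ι) S2 := Finset.disjoint_empty_left _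
    have hUe : Utot u (∅ : Finset ι) = 0 := by simp [Utot]
    rw [rev_formula u r u0 ∅ S2 hd0 (by simp) hu2 hu0, hUe, Finset.sum_empty, hR,
      div_le_div_iff₀ (by positivity) (by positivity)] at hopt0
    simp only [← hU1def, ← hU2def, ← hA1def, ← hA2def] at hopt0
    have hkey : A2 * U1 ≤ A1 * (U1 + U2 + u0) := by
      nlinarith [hopt0, mul_nonneg (mul_nonneg (mul_nonneg hA2 hU1) hW.le) hD.le,
        mul_pos hW hW]
    -- Step B: compare with (S1, S2.erase x)
    have hT2sub : S2.erase x ⊆ X2 := (Finset.erase_subset _ _).trans hS2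
    have hu2' : ∀ y ∈ S2.erase x, 0 < u y := fun y hy =>
      hu2 y (Finset.mem_of_mem_erase hy)
    have hdT : Disjoint S1 (S2.erase x) := hd.mono_right (Finset.erase_subset _ _)
    have hUT : Utot u (S2.erase x) = U2 - u x := by
      rw [hU2def, Utot, Utot, ← Finset.sum_erase_add S2 _ hx2]; ring
    have hAT : (∑ y ∈ S2.erase x, u y * r y) = A2 - u x * r x := by
      rw [hA2def, ← Finset.sum_erase_add S2 _ hx2]; ring
    have hUTnn : 0 ≤ U2 - u x := by
      rw [← hUT]; exact Finset.sum_nonneg fun y hy => (hu2' y hy).le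
    have hW' : (0:ℝ) < U2 - u x + u0 := by linarith
    have hD' : (0:ℝ) < U1 + (U2 - u x) + u0 := by linarith
    have hopt2 := hopt S1 (S2.erase x) hS1 hT2sub
    rw [rev_formula u r u0 S1 _ hdT hu1 hu2' hu0, hUT, hAT, hR,
      div_le_div_iff₀ (by positivity) (by positivity)] at hopt2
    simp only [← hU1def, ← hU2def, ← hA1def, ← hA2def] at hopt2
    by_contra hcon
    push_neg at hcon
    have p1 : 0 < u x * ((U2 - u x + u0) *
        (A1 * (U1 + U2 + u0) + A2 * (U2 + u0) - r x * (U1 + U2 + u0) ^ 2)) :=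
      mul_pos hv (mul_pos hW' (sub_pos.mpr hcon))
    have p2 : 0 ≤ u x * U1 * (A1 * (U1 + U2 + u0) - A2 * U1) :=
      mul_nonneg (mul_nonneg hv.le hU1) (sub_nonneg.mpr hkey)
    have hid : (A1 * (U1 + (U2 - u x) + u0) + (A2 - u x * r x) * (U2 - u x + u0)) *
          (U1 + U2 + u0) ^ 2 -
        (A1 * (U1 + U2 + u0) + A2 * (U2 + u0)) * (U1 + (U2 - u x) + u0) ^ 2 =
        u x * ((U2 - u x + u0) *
          (A1 * (U1 + U2 + u0) + A2 * (U2 + u0) - r x * (U1 + U2 + u0) ^ 2)) +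
        u x * U1 * (A1 * (U1 + U2 + u0) - A2 * U1) := by ring
    linarith [hopt2, hid, p1, p2]
end

section
/- Revenue-ordered assortments are not optimal under the SML: in the instance with level-1 product x₁₁ (revenue 10, utility 10), level-2 product x₂₁ (revenue 12, utility 2), and u₀ = 1, the optimal assortment is {x₁₁} with revenue 100/11 ≈ 9.09, while every revenue-ordered assortment (ordered by decreasing revenue over all products: {x₂₁} and {x₁₁,x₂₁}) has revenue at most 8.12, yielding an approximation ratio below 90%. -/
open Finset

/-- Revenue-ordered assortments are not optimal: level-1 product x₁₁ = 0 (revenue 10,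
utility 10), level-2 product x₂₁ = 1 (revenue 12, utility 2), u₀ = 1. The optimal
assortment is {x₁₁} with revenue 100/11, while the revenue-ordered assortments
{x₂₁} and {x₁₁,x₂₁} earn at most 8.12, a ratio below 90%. -/
theorem stmt13 :
    RevSML (![10, 2] : Fin 2 → ℝ) (![10, 12] : Fin 2 → ℝ) 1 {0} ∅ = 100 / 11 ∧
    (∀ S1 S2 : Finset (Fin 2), S1 ⊆ {0} → S2 ⊆ {1} →
        RevSML (![10, 2] : Fin 2 → ℝ) (![10, 12] : Fin 2 → ℝ) 1 S1 S2 ≤ 100 / 11) ∧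
    RevSML (![10, 2] : Fin 2 → ℝ) (![10, 12] : Fin 2 → ℝ) 1 ∅ {1} ≤ 8.12 ∧
    RevSML (![10, 2] : Fin 2 → ℝ) (![10, 12] : Fin 2 → ℝ) 1 {0} {1} ≤ 8.12 ∧
    (8.12 : ℝ) / (100 / 11) < 0.9 := by
  have e1 : RevSML (![10, 2] : Fin 2 → ℝ) (![10, 12] : Fin 2 → ℝ) 1 {0} ∅ = 100 / 11 := by
    simp [RevSML, alphaRev, Utot]
    norm_num
  have e2 : RevSML (![10, 2] : Fin 2 → ℝ) (![10, 12] : Fin 2 → ℝ) 1 ∅ {1} = 8 := by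
    simp [RevSML, alphaRev, Utot]
    norm_num
  have e3 : RevSML (![10, 2] : Fin 2 → ℝ) (![10, 12] : Fin 2 → ℝ) 1 {0} {1} = 100/13 + (3/13)*(24/13) := by
    simp [RevSML, alphaRev, Utot, Finset.sum_union, Finset.union_comm]
    norm_num
  have e4 : RevSML (![10, 2] : Fin 2 → ℝ) (![10, 12] : Fin 2 → ℝ) 1 (∅:Finset (Fin 2)) ∅ = 0 := by
    simp [RevSML, alphaRev, Utot]
  refine ⟨e1, ?_, by rw [e2]; norm_num, by rw [e3]; norm_num, by norm_num⟩
  intro S1 S2 h1 h2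
  rcases Finset.subset_singleton_iff.mp h1 with rfl|rfl <;>
    rcases Finset.subset_singleton_iff.mp h2 with rfl|rfl
  · rw [e4]; norm_num
  · rw [e2]; norm_num
  · rw [e1]
  · rw [e3]; norm_num
end

section
/- (Gap decomposition, level 1.) Let S = S₁ ⊎ S₂ with Z a nonempty subset of S₁. Then R(S) = R(S\Z)·(1 − λ(Z,S)) + [α(Z) − α(S₂)U(S₂)(U(S₂)+u₀)(1 − λ(Z,S))/(U(S) − U(Z) + u₀)²]·λ(Z,S), where λ(Z,S) = U(Z)/(U(S)+u₀). -/
set_option maxHeartbeats 1000000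


open Finset

lemma alpha_mul_utot {ι : Type*} (u r : ι → ℝ) (T : Finset ι)
    (h : ∀ x ∈ T, 0 < u x) :
    alphaRev u r T * Utot u T = ∑ x ∈ T, u x * r x := by
  rcases T.eq_empty_or_nonempty with rfl | hT
  · simp [alphaRev, Utot]
  · have : 0 < Utot u T := Finset.sum_pos h hT
    rw [alphaRev, div_mul_cancel₀ _ this.ne']

lemma alg14 (A B C a b z v : ℝ) (hz : z ≠ 0) (hD : a + z + b + v ≠ 0)
    (hD' : a + b + v ≠ 0) :
    (A + C * z) / (a + z + b + v) + B / (a + z + b + v) * (1 - (a + z) / (a + z + b + v)) =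
      (A / (a + b + v) + B / (a + b + v) * (1 - a / (a + b + v))) * (1 - z / (a + z + b + v)) +
        (C - B * (b + v) * (1 - z / (a + z + b + v)) / (a + z + b - z + v) ^ 2) *
          (z / (a + z + b + v)) := by
  have h : a + z + b - z + v = a + b + v := by ring
  rw [h]
  field_simp
  ring

/-- Gap decomposition at level 1: for Z a nonempty subset of S₁,
R(S) = R(S∖Z)·(1 − λ(Z,S))
     + [α(Z) − α(S₂)U(S₂)(U(S₂)+u₀)(1 − λ(Z,S))/(U(S) − U(Z) + u₀)²]·λ(Z,S),
where λ(Z,S) = U(Z)/(U(S)+u₀) and S∖Z = (S₁∖Z) ⊎ S₂. -/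
theorem stmt14 {ι : Type*} [DecidableEq ι] (u r : ι → ℝ) (u0 : ℝ)
    (S1 S2 Z : Finset ι)
    (hu : ∀ x ∈ S1 ∪ S2, 0 < u x) (hu0 : 0 < u0)
    (hd : Disjoint S1 S2) (hZ : Z ⊆ S1) (hZne : Z.Nonempty) :
    RevSML u r u0 S1 S2 =
      RevSML u r u0 (S1 \ Z) S2 * (1 - Utot u Z / (Utot u (S1 ∪ S2) + u0)) +
        (alphaRev u r Z -
            alphaRev u r S2 * Utot u S2 * (Utot u S2 + u0) *
              (1 - Utot u Z / (Utot u (S1 ∪ S2) + u0)) /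
              (Utot u (S1 ∪ S2) - Utot u Z + u0) ^ 2) *
          (Utot u Z / (Utot u (S1 ∪ S2) + u0)) := by
  have hu1 : ∀ x ∈ S1, 0 < u x := fun x hx => hu x (mem_union_left _ hx)
  have hu2 : ∀ x ∈ S2, 0 < u x := fun x hx => hu x (mem_union_right _ hx)
  have huZ : ∀ x ∈ Z, 0 < u x := fun x hx => hu1 x (hZ hx)
  have huD : ∀ x ∈ S1 \ Z, 0 < u x := fun x hx => hu1 x (mem_sdiff.1 hx).1
  -- utility sums
  have hz : 0 < Utot u Z := Finset.sum_pos huZ hZne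
  have ha : 0 ≤ Utot u (S1 \ Z) := Finset.sum_nonneg fun x hx => (huD x hx).le
  have hb : 0 ≤ Utot u S2 := Finset.sum_nonneg fun x hx => (hu2 x hx).le
  have hS1 : Utot u S1 = Utot u (S1 \ Z) + Utot u Z := by
    rw [Utot, Utot, Utot, Finset.sum_sdiff hZ]
  have hW : Utot u (S1 ∪ S2) = Utot u (S1 \ Z) + Utot u Z + Utot u S2 := by
    rw [Utot, Finset.sum_union hd, ← Utot, ← Utot, hS1]
  have hW' : Utot u ((S1 \ Z) ∪ S2) = Utot u (S1 \ Z) + Utot u S2 := by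
    rw [Utot, Finset.sum_union (hd.mono_left (sdiff_subset)), ← Utot, ← Utot]
  have hsum1 : alphaRev u r S1 * Utot u S1
      = alphaRev u r (S1 \ Z) * Utot u (S1 \ Z) + alphaRev u r Z * Utot u Z := by
    rw [alpha_mul_utot u r S1 hu1, alpha_mul_utot u r (S1 \ Z) huD,
      alpha_mul_utot u r Z huZ, Finset.sum_sdiff hZ]
  -- denominators
  have hD : (0:ℝ) < Utot u (S1 ∪ S2) + u0 := by rw [hW]; linarith
  have hD' : (0:ℝ) < Utot u (S1 ∪ S2) - Utot u Z + u0 := by rw [hW]; linarith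
  rw [RevSML, RevSML, hsum1, hW', hW, hS1]
  have hDz : Utot u (S1 \ Z) + Utot u Z + Utot u S2 + u0 ≠ 0 := by
    rw [hW] at hD; linarith
  have hD'z : Utot u (S1 \ Z) + Utot u S2 + u0 ≠ 0 := by
    rw [hW] at hD'; linarith
  exact alg14 _ _ _ _ _ _ _ hz.ne' hDz hD'z
end

section
/- (Gap decomposition, level 2.) Let S = S₁ ⊎ S₂ with Z a nonempty subset of S₂. Then R(S) = R(S\Z)·(1 − λ(Z,S)) + [α(Z)(U(S₂)+u₀)/(U(S)+u₀) + α(S₂\Z)(U(S₂) − U(Z))·U(S₁)/((U(S) − U(Z) + u₀)(U(S)+u₀))]·λ(Z,S), where λ(Z,S) = U(Z)/(U(S)+u₀). -/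
open Finset

lemma aux_alpha_mul {ι : Type*} (u r : ι → ℝ) (S : Finset ι)
    (hpos : ∀ x ∈ S, 0 ≤ u x) :
    alphaRev u r S * Utot u S = ∑ x ∈ S, u x * r x := by
  by_cases hU : Utot u S = 0
  · have hz : ∀ x ∈ S, u x = 0 := (Finset.sum_eq_zero_iff_of_nonneg hpos).mp hU
    rw [hU, mul_zero]
    exact (Finset.sum_eq_zero fun x hx => by rw [hz x hx, zero_mul]).symm
  · exact div_mul_cancel₀ _ hU

set_option maxHeartbeats 4000000 in
/-- Gap decomposition at level 2: for Z a nonempty subset of S₂,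
R(S) = R(S∖Z)·(1 − λ(Z,S))
     + [α(Z)(U(S₂)+u₀)/(U(S)+u₀)
        + α(S₂∖Z)(U(S₂) − U(Z))·U(S₁)/((U(S) − U(Z) + u₀)(U(S)+u₀))]·λ(Z,S),
where λ(Z,S) = U(Z)/(U(S)+u₀) and S∖Z = S₁ ⊎ (S₂∖Z). -/
theorem stmt15 {ι : Type*} [DecidableEq ι] (u r : ι → ℝ) (u0 : ℝ)
    (S1 S2 Z : Finset ι)
    (hu : ∀ x ∈ S1 ∪ S2, 0 < u x) (hu0 : 0 < u0)
    (hd : Disjoint S1 S2) (hZ : Z ⊆ S2) (hZne : Z.Nonempty) :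
    RevSML u r u0 S1 S2 =
      RevSML u r u0 S1 (S2 \ Z) * (1 - Utot u Z / (Utot u (S1 ∪ S2) + u0)) +
        (alphaRev u r Z * (Utot u S2 + u0) / (Utot u (S1 ∪ S2) + u0) +
            alphaRev u r (S2 \ Z) * (Utot u S2 - Utot u Z) * Utot u S1 /
              ((Utot u (S1 ∪ S2) - Utot u Z + u0) * (Utot u (S1 ∪ S2) + u0))) *
          (Utot u Z / (Utot u (S1 ∪ S2) + u0)) := by
  have hD : S2 \ Z ⊆ S2 := Finset.sdiff_subset
  have hu1 : ∀ x ∈ S1, 0 ≤ u x := fun x hx => (hu x (Finset.mem_union_left _ hx)).le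
  have hu2 : ∀ x ∈ S2, 0 ≤ u x := fun x hx => (hu x (Finset.mem_union_right _ hx)).le
  have huD : ∀ x ∈ S2 \ Z, 0 ≤ u x := fun x hx => hu2 x (hD hx)
  -- abbreviations
  set A1 := ∑ x ∈ S1, u x * r x with hA1
  set AD := ∑ x ∈ S2 \ Z, u x * r x with hAD
  set AZ := ∑ x ∈ Z, u x * r x with hAZ
  set B1 := Utot u S1 with hB1
  set BD := Utot u (S2 \ Z) with hBD
  set BZ := Utot u Z with hBZdef
  -- sum decompositions
  have h2 : Utot u S2 = BD + BZ := by
    rw [hBD, hBZdef]; simp only [Utot]; rw [Finset.sum_sdiff hZ]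
  have hA2 : ∑ x ∈ S2, u x * r x = AD + AZ := by
    rw [hAD, hAZ, Finset.sum_sdiff hZ]
  have hU : Utot u (S1 ∪ S2) = B1 + (BD + BZ) := by
    simp only [Utot, hB1]; rw [Finset.sum_union hd, ← h2]; rfl
  have hU' : Utot u (S1 ∪ (S2 \ Z)) = B1 + BD := by
    simp only [Utot, hB1, hBD]
    rw [Finset.sum_union (hd.mono_right hD)]
  -- positivity
  have hBZ : 0 < BZ := Finset.sum_pos (fun x hx => hu x (Finset.mem_union_right _ (hZ hx))) hZne
  have hB1n : 0 ≤ B1 := Finset.sum_nonneg hu1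
  have hBDn : 0 ≤ BD := Finset.sum_nonneg huD
  have hDen : 0 < B1 + (BD + BZ) + u0 := by positivity
  have hDen' : 0 < B1 + BD + u0 := by positivity
  -- alpha products
  have e1 : alphaRev u r S1 * Utot u S1 = A1 := aux_alpha_mul u r S1 hu1
  have e2 : alphaRev u r S2 * Utot u S2 = AD + AZ := by
    rw [aux_alpha_mul u r S2 hu2, hA2]
  have eD : alphaRev u r (S2 \ Z) * Utot u (S2 \ Z) = AD := aux_alpha_mul u r (S2 \ Z) huD
  have eD' : alphaRev u r (S2 \ Z) * (Utot u S2 - Utot u Z) = AD := by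
    rw [h2]; rw [show BD + BZ - BZ = Utot u (S2 \ Z) by rw [hBD]; ring]; exact eD
  have eZ : alphaRev u r Z = AZ / BZ := rfl
  rw [RevSML, RevSML, e1, e2, eD', eZ, hU, hU', h2]
  rw [show alphaRev u r (S2 \ Z) * Utot u (S2 \ Z) = AD from eD]
  rw [show B1 + (BD + BZ) - BZ + u0 = B1 + BD + u0 from by ring]
  field_simp [hDen.ne', hDen'.ne', hBZ.ne']
  ring
end
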